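/- Let K, N_R ∈ ℕ and d : Fin K → ℝ with d_i ≥ 0 for all i, and set Λ_R = ∑_i d_i. On S = {x : Fin K → ℕ | ∑_i x_i ≤ N_R} define π(x) = (N_R!/(1+Λ_R)^{N_R})·(1/(N_R − ∑_i x_i)!)·∏_i d_i^{x_i}/x_i!. Then for every n ≤ N_R, ∑_{x ∈ S, ∑_i x_i = N_R − n} π(x) = C(N_R, n)·Λ_R^{N_R − n}/(1 + Λ_R)^{N_R}; i.e. under π the number of free ribosomes F_R = N_R − ∑_i x_i has the binomial distribution B(N_R, 1/(1+Λ_R)). -/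

import Mathlib

/-!
On the level set `∑ i, x i = N_R - n` the factor `1 / (N_R - ∑ i, x i)!` is the constant `1 / n!`,
and by the multinomial theorem the sum of `∏ i, d i ^ x i / (x i)!` over that level set is
`Λ_R ^ (N_R - n) / (N_R - n)!`; together with `N_R! / (1 + Λ_R) ^ N_R` this gives the binomial law.
-/

open Finset Nat

theorem Finset.sum_piAntidiag_prod_pow_div_factorial {ι K : Type*} [DecidableEq ι] [Field K]
    [CharZero K] (s : Finset ι) (f : ι → K) (n : ℕ) :
    ∑ k ∈ piAntidiag s n, ∏ i ∈ s, f i ^ k i / (k i)! = (∑ i ∈ s, f i) ^ n / n ! := by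
  rw [sum_pow_eq_sum_piAntidiag, sum_div]
  refine sum_congr rfl fun k hk => ?_
  have hspec : (∏ i ∈ s, ((k i)! : K)) * multinomial s k = n ! := by
    rw [← (mem_piAntidiag.mp hk).1]
    exact_mod_cast multinomial_spec s k
  have hprod : (∏ i ∈ s, ((k i)! : K)) ≠ 0 :=
    prod_ne_zero_iff.mpr fun i _ => cast_ne_zero.mpr (factorial_ne_zero _)
  have hmult : (multinomial s k : K) ≠ 0 := cast_ne_zero.mpr (multinomial_pos s k).ne'
  rw [prod_div_distrib, ← hspec]
  field_simp

theorem filter_sum_eq_piAntidiag {ι : Type*} [Fintype ι] [DecidableEq ι] {N m : ℕ}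
    (hm : m ≤ N) :
    ((Iic (fun _ => N)).filter (fun x : ι → ℕ => ∑ i, x i ≤ N)).filter (fun x => ∑ i, x i = m)
      = piAntidiag univ m := by
  ext x
  simp only [mem_filter, mem_Iic, mem_piAntidiag, Pi.le_def]
  constructor
  · rintro ⟨-, hx⟩
    exact ⟨hx, fun _ _ => mem_univ _⟩
  · rintro ⟨hx, -⟩
    refine ⟨⟨fun i => ?_, hx ▸ hm⟩, hx⟩
    calc x i ≤ ∑ j, x j := single_le_sum (fun j _ => zero_le (x j)) (mem_univ i)
      _ ≤ N := hx ▸ hm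

theorem ribosome_free_binomial_general
    (K NR : ℕ) (d : Fin K → ℝ)
    (ΛR : ℝ) (hΛ : ΛR = ∑ i, d i)
    (S : Finset (Fin K → ℕ))
    (hS : S = (Finset.Iic (fun _ => NR)).filter (fun x => (∑ i, x i) ≤ NR))
    (π : (Fin K → ℕ) → ℝ)
    (hπ : ∀ x, π x = (Nat.factorial NR : ℝ) / (1 + ΛR) ^ NR
      * (1 / (Nat.factorial (NR - ∑ i, x i) : ℝ))
      * ∏ i, d i ^ (x i) / (Nat.factorial (x i) : ℝ)) :
    ∀ n : ℕ, n ≤ NR →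
      (∑ x ∈ S.filter (fun x => (∑ i, x i) = NR - n), π x)
        = (Nat.choose NR n : ℝ) * ΛR ^ (NR - n) / (1 + ΛR) ^ NR := by
  intro n hn
  have hπ_level : ∀ x ∈ piAntidiag univ (NR - n),
      π x = (NR ! : ℝ) / (1 + ΛR) ^ NR * (1 / (n ! : ℝ)) * ∏ i, d i ^ x i / ((x i)! : ℝ) := by
    intro x hx
    rw [hπ, (mem_piAntidiag.mp hx).1, Nat.sub_sub_self hn]
  rw [hS, filter_sum_eq_piAntidiag (Nat.sub_le NR n), sum_congr rfl hπ_level, ← mul_sum,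
    sum_piAntidiag_prod_pow_div_factorial, ← hΛ, Nat.cast_choose ℝ hn]
  ring

/-- For the invariant distribution
`π x = (N_R!/(1+Λ_R)^{N_R}) (1/(N_R − ∑ x i)!) ∏ i, d i^{x i}/(x i)!` of the ribosome
allocation model on `S = {x : Fin K → ℕ | ∑ i, x i ≤ N_R}` (with `Λ_R = ∑ i, d i`): for
every `n ≤ N_R`, the `π`-probability that `∑ i, x i = N_R − n` equals
`C(N_R, n) Λ_R^{N_R−n}/(1+Λ_R)^{N_R}`, i.e. the number of free ribosomes
`F_R = N_R − ∑ i, x i` is binomially distributed `B(N_R, 1/(1+Λ_R))` under `π`. -/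
theorem ribosome_free_binomial
    (K NR : ℕ) (d : Fin K → ℝ) (hd : ∀ i, 0 ≤ d i)
    (ΛR : ℝ) (hΛ : ΛR = ∑ i, d i)
    (S : Finset (Fin K → ℕ))
    (hS : S = (Finset.Iic (fun _ => NR)).filter (fun x => (∑ i, x i) ≤ NR))
    (π : (Fin K → ℕ) → ℝ)
    (hπ : ∀ x, π x = (Nat.factorial NR : ℝ) / (1 + ΛR) ^ NR
      * (1 / (Nat.factorial (NR - ∑ i, x i) : ℝ))
      * ∏ i, d i ^ (x i) / (Nat.factorial (x i) : ℝ)) :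
    ∀ n : ℕ, n ≤ NR →
      (∑ x ∈ S.filter (fun x => (∑ i, x i) = NR - n), π x)
        = (Nat.choose NR n : ℝ) * ΛR ^ (NR - n) / (1 + ΛR) ^ NR :=
  ribosome_free_binomial_general K NR d ΛR hΛ S hS π hπ
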